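/- For every admissible subgroup L of ℤ × ℤ, the snub-square torus graph G(L) — the edge graph of the semi-equivelar map of type {3²,4,3,4} on the torus determined by L — is Hamiltonian. -/

import Mathlib

/-- `e₁ = (1,0)` in `ℤ × ℤ`. -/
def e₁ : ℤ × ℤ := (1, 0)

/-- `e₂ = (0,1)` in `ℤ × ℤ`. -/
def e₂ : ℤ × ℤ := (0, 1)

/-- A subgroup `L ≤ ℤ × ℤ` is admissible if it has finite index and contains no nonzero
vector `(v₁, v₂)` with `|v₁| ≤ 2` and `|v₂| ≤ 2`. -/
def Admissible (L : AddSubgroup (ℤ × ℤ)) : Prop :=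
  Finite ((ℤ × ℤ) ⧸ L) ∧ ∀ v ∈ L, v ≠ 0 → ¬(|v.1| ≤ 2 ∧ |v.2| ≤ 2)

/-- A graph is Hamiltonian if it contains a cycle visiting every vertex (exactly once:
a cycle repeats no vertex other than its basepoint). -/
def SimpleGraph.Hamiltonian {α : Type*} (G : SimpleGraph α) : Prop :=
  ∃ (a : α) (p : G.Walk a a), p.IsCycle ∧ ∀ v, v ∈ p.support

/-- The edge relation of the snub-square graph over an abelian group `A`. Vertices are
written `(x, α, β)` for `(x; α, β)`. -/
def snubSquareRel {A : Type*} [AddCommGroup A] (E₁ E₂ : A) :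
    A × Fin 2 × Fin 2 → A × Fin 2 × Fin 2 → Prop := fun u v =>
  (∃ (x : A) (α : Fin 2), u = (x, α, 0) ∧ v = (x, α, 1)) ∨
  (∃ (x : A) (α : Fin 2), u = (x, α, 1) ∧ v = (x + E₁, α, 0)) ∨
  (∃ (x : A) (β : Fin 2), u = (x, 0, β) ∧ v = (x, 1, β)) ∨
  (∃ (x : A) (β : Fin 2), u = (x, 1, β) ∧ v = (x + E₂, 0, β)) ∨
  (∃ x : A, u = (x, 0, 1) ∧ v = (x, 1, 0)) ∨
  (∃ x : A, u = (x, 1, 1) ∧ v = (x + E₁ + E₂, 0, 0))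

/-- The snub-square graph over an abelian group `A`. -/
def snubSquareGraph {A : Type*} [AddCommGroup A] (E₁ E₂ : A) :
    SimpleGraph (A × Fin 2 × Fin 2) :=
  SimpleGraph.fromRel (snubSquareRel E₁ E₂)

/-- The snub-square torus graph `G(L)`, the edge graph of the semi-equivelar map of type
`{3²,4,3,4}` on the torus determined by `L`. -/
def snubSquareTorusGraph (L : AddSubgroup (ℤ × ℤ)) :
    SimpleGraph (((ℤ × ℤ) ⧸ L) × Fin 2 × Fin 2) :=
  snubSquareGraph (QuotientAddGroup.mk e₁) (QuotientAddGroup.mk e₂)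

/-!
Let `A` be a finite abelian group generated by `E₁` and `E₂`, as `(ℤ × ℤ) ⧸ L` is by `[e₁]` and
`[e₂]`. The cosets of `⟨E₁⟩` are `t` rows of `r = addOrderOf E₁`
cells `{x} × {0,1}²`, and `s • E₁ + t • E₂ = 0` for some `s < r`. A *hairpin* runs through
consecutive cells of a row out along their vertices with `α = 0` and back along those with
`α = 1`, ending in the cell where it started; a *snake* walks round each cell of a row segment in
turn. Snaking through the first `s` cells of row `0`, hairpinning through its other `r - s`
cells, and then climbing by `E₂`-edges through the remaining `t - 1` rows, each a full hairpin,
returns to the start because `s • E₁ + t • E₂ = 0`. This closed walk has length `4rt`, the number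
of vertices, and visits every vertex, so it is a Hamiltonian cycle.
-/

namespace SimpleGraph

theorem Hamiltonian.of_length_eq_card {V : Type*} [Fintype V] {G : SimpleGraph V} {u : V}
    (p : G.Walk u u) (hlen : p.length = Fintype.card V) (hcard : 3 ≤ Fintype.card V)
    (hmem : ∀ v, v ∈ p.support) : G.Hamiltonian := by
  classical
  have hnil : ¬p.Nil := by rw [← Walk.length_eq_zero_iff]; omega
  have hmem_tail (v : V) : v ∈ p.support.tail := by
    rcases List.mem_cons.mp (p.cons_tail_support ▸ hmem v) with rfl | h
    · exact p.end_mem_tail_support hnil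
    · exact h
  have hnodup : p.support.tail.Nodup := by
    rw [← Multiset.coe_nodup, ← Multiset.toFinset_card_eq_card_iff_nodup,
      Finset.eq_univ_of_forall fun v => Multiset.mem_toFinset.mpr (hmem_tail v)]
    simp [hlen]
  refine ⟨u, p, Walk.isCycle_iff_isPath_tail_and_le_length.mpr ⟨?_, by omega⟩, hmem⟩
  exact Walk.IsPath.mk' (by rwa [p.support_tail_of_not_nil hnil])

end SimpleGraph

section GeneratedByPair

open AddSubgroup QuotientAddGroup

variable {A : Type*} [AddCommGroup A] {E₁ E₂ : A}

theorem exists_lt_addOrderOf_nsmul_eq [Finite A] {y : A} (hy : y ∈ zmultiples E₁) :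
    ∃ i < addOrderOf E₁, i • E₁ = y := by
  classical
  simpa using mem_zmultiples_iff_mem_range_addOrderOf.mp hy

theorem mem_zmultiples_mk_of_closure_eq_top (h : closure {E₁, E₂} = ⊤) (y : A ⧸ zmultiples E₁) :
    y ∈ zmultiples (mk E₂ : A ⧸ zmultiples E₁) := by
  obtain ⟨x, rfl⟩ := mk_surjective y
  obtain ⟨m, n, rfl⟩ := mem_closure_pair.mp (h ▸ mem_top x)
  have hE₁ : (mk E₁ : A ⧸ zmultiples E₁) = 0 := (eq_zero_iff E₁).mpr (mem_zmultiples E₁)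
  exact ⟨n, by simp [hE₁]⟩

theorem card_eq_addOrderOf_mk_mul_addOrderOf [Finite A] (h : closure {E₁, E₂} = ⊤) :
    Nat.card A = addOrderOf (mk E₂ : A ⧸ zmultiples E₁) * addOrderOf E₁ := by
  rw [card_eq_card_quotient_mul_card_addSubgroup (zmultiples E₁), Nat.card_zmultiples,
    addOrderOf_eq_card_of_forall_mem_zmultiples (mem_zmultiples_mk_of_closure_eq_top h)]

theorem exists_nsmul_add_nsmul_eq [Finite A] (h : closure {E₁, E₂} = ⊤) (x : A) :
    ∃ j < addOrderOf (mk E₂ : A ⧸ zmultiples E₁), ∃ i < addOrderOf E₁, j • E₂ + i • E₁ = x := by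
  classical
  obtain ⟨j, hj, hjx⟩ := Finset.mem_image.mp <|
    mem_zmultiples_iff_mem_range_addOrderOf.mp (mem_zmultiples_mk_of_closure_eq_top h (mk x))
  obtain ⟨i, hi, hix⟩ := exists_lt_addOrderOf_nsmul_eq (E₁ := E₁) (y := x - j • E₂) <| by
    rw [← eq_zero_iff, mk_sub, mk_nsmul, hjx, sub_self]
  exact ⟨j, Finset.mem_range.mp hj, i, hi, by rw [hix, add_sub_cancel]⟩

theorem exists_nsmul_add_addOrderOf_mk_nsmul_eq_zero [Finite A] (E₂ : A) :
    ∃ s < addOrderOf E₁, s • E₁ + addOrderOf (mk E₂ : A ⧸ zmultiples E₁) • E₂ = 0 := by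
  obtain ⟨s, hs, hsE⟩ := exists_lt_addOrderOf_nsmul_eq (E₁ := E₁)
    (y := -(addOrderOf (mk E₂ : A ⧸ zmultiples E₁) • E₂)) <| by
    rw [neg_mem_iff, ← eq_zero_iff, mk_nsmul, addOrderOf_nsmul_eq_zero]
  exact ⟨s, hs, by rw [hsE, neg_add_cancel]⟩

end GeneratedByPair

namespace snubSquareGraph

open SimpleGraph

variable {A : Type*} [AddCommGroup A] {E₁ E₂ : A}

theorem adj_β_zero_one (x : A) (α : Fin 2) :
    (snubSquareGraph E₁ E₂).Adj (x, α, 0) (x, α, 1) := by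
  rw [snubSquareGraph, fromRel_adj]
  exact ⟨by simp, .inl (.inl ⟨x, α, rfl, rfl⟩)⟩

theorem adj_α_zero_one (x : A) (β : Fin 2) :
    (snubSquareGraph E₁ E₂).Adj (x, 0, β) (x, 1, β) := by
  rw [snubSquareGraph, fromRel_adj]
  exact ⟨by simp, .inl (.inr (.inr (.inl ⟨x, β, rfl, rfl⟩)))⟩

theorem adj_add_E₁ (x : A) (α : Fin 2) :
    (snubSquareGraph E₁ E₂).Adj (x, α, 1) (x + E₁, α, 0) := by
  rw [snubSquareGraph, fromRel_adj]
  exact ⟨by simp, .inl (.inr (.inl ⟨x, α, rfl, rfl⟩))⟩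

theorem adj_add_E₂ (x : A) (β : Fin 2) :
    (snubSquareGraph E₁ E₂).Adj (x, 1, β) (x + E₂, 0, β) := by
  rw [snubSquareGraph, fromRel_adj]
  exact ⟨by simp, .inl (.inr (.inr (.inr (.inl ⟨x, β, rfl, rfl⟩))))⟩

def hairpin : (m : ℕ) → (x : A) → (snubSquareGraph E₁ E₂).Walk (x, 0, 0) (x, 1, 0)
  | 0, x => .cons (adj_β_zero_one x 0) <| .cons (adj_α_zero_one x 1) <|
      .cons (adj_β_zero_one x 1).symm .nil
  | m + 1, x => .cons (adj_β_zero_one x 0) <| .cons (adj_add_E₁ x 0) <|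
      (hairpin m (x + E₁)).append <| .cons (adj_add_E₁ x 1).symm <|
      .cons (adj_β_zero_one x 1).symm .nil

def snake : (m : ℕ) → (x : A) → (snubSquareGraph E₁ E₂).Walk (x, 0, 0) (x + m • E₁, 0, 0)
  | 0, x => Walk.nil.copy rfl (by simp)
  | m + 1, x => .cons (adj_α_zero_one x 0) <| .cons (adj_β_zero_one x 1) <|
      .cons (adj_α_zero_one x 1).symm <|
      .cons (adj_add_E₁ x 0) <| (snake m (x + E₁)).copy rfl (by rw [succ_nsmul', add_assoc])

def stack (n : ℕ) :
    (m : ℕ) → (x : A) → (snubSquareGraph E₁ E₂).Walk (x, 1, 0) (x + m • E₂, 1, 0)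
  | 0, x => Walk.nil.copy rfl (by simp)
  | m + 1, x => .cons (adj_add_E₂ x 0) <| (hairpin n (x + E₂)).append <|
      (stack n m (x + E₂)).copy rfl (by rw [succ_nsmul', add_assoc])

@[simp] theorem length_hairpin (m : ℕ) (x : A) :
    (hairpin (E₁ := E₁) (E₂ := E₂) m x).length = 4 * m + 3 := by
  induction m generalizing x with
  | zero => rfl
  | succ m ih => simp [hairpin, ih]; ring

@[simp] theorem length_snake (m : ℕ) (x : A) :
    (snake (E₁ := E₁) (E₂ := E₂) m x).length = 4 * m := by
  induction m generalizing x with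
  | zero => simp [snake]
  | succ m ih => simp [snake, ih]; ring

@[simp] theorem length_stack (n m : ℕ) (x : A) :
    (stack (E₁ := E₁) (E₂ := E₂) n m x).length = m * (4 * n + 4) := by
  induction m generalizing x with
  | zero => simp [stack]
  | succ m ih => simp [stack, ih]; ring

theorem mem_support_hairpin {m i : ℕ} (hi : i ≤ m) (x : A) (p : Fin 2 × Fin 2) :
    (x + i • E₁, p) ∈ (hairpin (E₁ := E₁) (E₂ := E₂) m x).support := by
  induction m generalizing x i with
  | zero =>
    obtain rfl : i = 0 := by omega
    fin_cases p <;> simp [hairpin]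
  | succ m ih =>
    rcases i with _ | i
    · fin_cases p <;> simp [hairpin]
    · simp only [hairpin, Walk.support_cons, Walk.support_append, List.mem_cons, List.mem_append]
      rw [succ_nsmul', ← add_assoc]
      exact .inr (.inr (.inl (ih (by omega) (x + E₁))))

theorem mem_support_snake {m i : ℕ} (hi : i < m) (x : A) (p : Fin 2 × Fin 2) :
    (x + i • E₁, p) ∈ (snake (E₁ := E₁) (E₂ := E₂) m x).support := by
  induction m generalizing x i with
  | zero => omega
  | succ m ih =>
    rcases i with _ | i
    · fin_cases p <;> simp [snake]
    · simp only [snake, Walk.support_cons, Walk.support_copy, List.mem_cons]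
      rw [succ_nsmul', ← add_assoc]
      exact .inr (.inr (.inr (.inr (ih (by omega) (x + E₁)))))

theorem mem_support_stack {n m i j : ℕ} (hj₀ : 0 < j) (hj : j ≤ m) (hi : i ≤ n) (x : A)
    (p : Fin 2 × Fin 2) :
    (x + j • E₂ + i • E₁, p) ∈ (stack (E₁ := E₁) (E₂ := E₂) n m x).support := by
  induction m generalizing x j with
  | zero => omega
  | succ m ih =>
    simp only [stack, Walk.support_cons, List.mem_cons, Walk.mem_support_append_iff,
      Walk.support_copy]
    rcases j with _ | _ | j
    · omega
    · exact .inr (.inl (by simpa using mem_support_hairpin hi (x + E₂) p))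
    · rw [succ_nsmul' E₂ (j + 1), ← add_assoc]
      exact .inr (.inr (ih (by omega) (by omega) (x + E₂)))

def tour (s k u : ℕ) (x : A) :
    (snubSquareGraph E₁ E₂).Walk (x, 0, 0) (x + s • E₁ + (u + 1) • E₂, 0, 0) :=
  ((snake s x).append <| (hairpin k (x + s • E₁)).append <|
    (stack (s + k) u (x + s • E₁)).concat (adj_add_E₂ _ 0)).copy rfl
    (by rw [succ_nsmul, ← add_assoc])

@[simp] theorem length_tour (s k u : ℕ) (x : A) :
    (tour (E₁ := E₁) (E₂ := E₂) s k u x).length = 4 * ((s + k + 1) * (u + 1)) := by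
  simp [tour]; ring

theorem mem_support_tour {s k u i j : ℕ} (hE₁ : (s + k + 1) • E₁ = 0) (hj : j ≤ u)
    (hi : i ≤ s + k) (x : A) (p : Fin 2 × Fin 2) :
    (x + s • E₁ + j • E₂ + i • E₁, p) ∈ (tour (E₁ := E₁) (E₂ := E₂) s k u x).support := by
  simp only [tour, Walk.support_copy, Walk.mem_support_append_iff, Walk.support_concat,
    List.mem_append]
  rcases j with _ | j
  · rw [zero_smul, add_zero]
    rcases le_or_gt i k with hik | hki
    · exact .inr (.inl (mem_support_hairpin hik _ p))
    · have hwrap : x + s • E₁ + i • E₁ = x + (i - (k + 1)) • E₁ := by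
        rw [add_assoc, ← add_nsmul, show s + i = (s + k + 1) + (i - (k + 1)) by omega, add_nsmul,
          hE₁, zero_add]
      exact .inl (hwrap ▸ mem_support_snake (m := s) (by omega) x p)
  · exact .inr (.inr (.inl (mem_support_stack (by omega) hj hi _ p)))

end snubSquareGraph

open SimpleGraph AddSubgroup QuotientAddGroup snubSquareGraph in
theorem snubSquareGraph_hamiltonian {A : Type*} [AddCommGroup A] [Finite A] {E₁ E₂ : A}
    (h : closure {E₁, E₂} = ⊤) : (snubSquareGraph E₁ E₂).Hamiltonian := by
  have := Fintype.ofFinite A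
  obtain ⟨s, hs, hshift⟩ := exists_nsmul_add_addOrderOf_mk_nsmul_eq_zero (E₁ := E₁) E₂
  obtain ⟨k, hk⟩ : ∃ k, addOrderOf E₁ = s + k + 1 := ⟨addOrderOf E₁ - s - 1, by omega⟩
  obtain ⟨u, hu⟩ : ∃ u, addOrderOf (mk E₂ : A ⧸ zmultiples E₁) = u + 1 :=
    ⟨_, (Nat.succ_pred_eq_of_pos (addOrderOf_pos _)).symm⟩
  have hcard : Fintype.card (A × Fin 2 × Fin 2) = 4 * ((s + k + 1) * (u + 1)) := by
    rw [Fintype.card_prod, Fintype.card_prod, Fintype.card_fin, ← Nat.card_eq_fintype_card,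
      card_eq_addOrderOf_mk_mul_addOrderOf h, hk, hu]
    ring
  refine Hamiltonian.of_length_eq_card ((tour s k u 0).copy rfl (by rw [zero_add, ← hu, hshift]))
    (by simp [hcard]) (hcard ▸ by nlinarith) ?_
  rintro ⟨x, p⟩
  obtain ⟨j, hj, i, hi, hx⟩ := exists_nsmul_add_nsmul_eq h (x - s • E₁)
  have hx' : x = 0 + s • E₁ + j • E₂ + i • E₁ := by rw [zero_add, add_assoc, hx, add_sub_cancel]
  rw [Walk.support_copy, hx']
  exact mem_support_tour (hk ▸ addOrderOf_nsmul_eq_zero E₁) (by omega) (by omega) 0 p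

theorem closure_mk_e₁_mk_e₂_eq_top (L : AddSubgroup (ℤ × ℤ)) :
    AddSubgroup.closure {(QuotientAddGroup.mk e₁ : (ℤ × ℤ) ⧸ L), QuotientAddGroup.mk e₂} = ⊤ := by
  refine eq_top_iff.mpr fun x _ => ?_
  obtain ⟨v, rfl⟩ := QuotientAddGroup.mk_surjective x
  refine AddSubgroup.mem_closure_pair.mpr ⟨v.1, v.2, ?_⟩
  rw [← QuotientAddGroup.mk_zsmul, ← QuotientAddGroup.mk_zsmul, ← QuotientAddGroup.mk_add]
  congr 1
  ext <;> simp [e₁, e₂]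

/-- Every snub-square torus graph (type `{3²,4,3,4}`) is Hamiltonian. -/
theorem snubSquareTorusGraph_hamiltonian (L : AddSubgroup (ℤ × ℤ)) (hL : Admissible L) :
    (snubSquareTorusGraph L).Hamiltonian :=
  have := hL.1
  snubSquareGraph_hamiltonian (closure_mk_e₁_mk_e₂_eq_top L)
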